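/- arXiv:math/0212333 — 7 statements merged into one kernel-verified Lean document; each statement's English description precedes it below -/
import Mathlib

section
/- Let G be a group satisfying condition (𝒩,3): every subset of G with 4 elements contains two elements x, y such that ⟨x, y⟩ is nilpotent. Then for all x, y in G, the subgroup ⟨x, xʸ⟩ is nilpotent, where xʸ = y⁻¹xy. -/
/-- Condition (𝒩,3): every subset of `G` with 4 elements contains a pair generating
a nilpotent subgroup. -/
def CondN3 (G : Type*) [Group G] : Prop :=
  ∀ S : Finset G, S.card = 4 → ∃ x ∈ S, ∃ y ∈ S, x ≠ y ∧
    Group.IsNilpotent ↥(Subgroup.closure {x, y})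

/-!
If `x` and `y` commute, `⟨xy, yx⟩` is cyclic. Otherwise `x, y, xy, yx` are distinct and (𝒩,3)
applies to them. Any two of them either generate `⟨x, y⟩` (one of `x, y` together with a product
involving it recovers the other by cancellation) or are `xy` and `yx`; either way they generate a
subgroup containing `⟨xy, yx⟩`, which is therefore nilpotent. Substituting `y⁻¹x` for `x` turns
`yx` into `x` and `xy` into `xʸ`.
-/

section

open Subgroup

variable {G : Type*} [Group G]

theorem Subgroup.isNilpotent_of_le {H K : Subgroup G} (hle : H ≤ K) [Group.IsNilpotent K] :
    Group.IsNilpotent H :=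
  Group.nilpotent_of_surjective (subgroupOfEquivOfLe hle).toMonoidHom
    (subgroupOfEquivOfLe hle).surjective

theorem mul_mem_and_mul_mem_of_two_mem {K : Subgroup G} {x y u v : G}
    (hu : u ∈ ({x, y, x * y, y * x} : Set G)) (hv : v ∈ ({x, y, x * y, y * x} : Set G))
    (huv : u ≠ v) (huK : u ∈ K) (hvK : v ∈ K) : x * y ∈ K ∧ y * x ∈ K := by
  suffices x ∈ K ∧ y ∈ K ∨ x * y ∈ K ∧ y * x ∈ K by
    rcases this with ⟨hx, hy⟩ | h
    · exact ⟨K.mul_mem hx hy, K.mul_mem hy hx⟩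
    · exact h
  simp only [Set.mem_insert_iff, Set.mem_singleton_iff] at hu hv
  rcases hu with rfl | rfl | rfl | rfl <;> rcases hv with rfl | rfl | rfl | rfl <;>
    simp_all [K.mul_mem_cancel_left, K.mul_mem_cancel_right]

theorem card_eq_four_of_not_commute [DecidableEq G] {x y : G} (h : ¬Commute x y) :
    ({x, y, x * y, y * x} : Finset G).card = 4 := by
  have hx : x ≠ 1 := by rintro rfl; exact h (Commute.one_left y)
  have hy : y ≠ 1 := by rintro rfl; exact h (Commute.one_right x)
  have hxy : x ≠ y := by rintro rfl; exact h (Commute.refl x)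
  have hc : x * y ≠ y * x := h
  rw [Finset.card_insert_of_notMem, Finset.card_insert_of_notMem, Finset.card_insert_of_notMem,
    Finset.card_singleton]
  all_goals simp [*]

theorem CondN3.isNilpotent_closure_mul_mul (h : CondN3 G) (x y : G) :
    Group.IsNilpotent (closure {x * y, y * x}) := by
  by_cases hc : Commute x y
  · rw [hc.eq, Set.pair_eq_singleton, ← zpowers_eq_closure]
    open IsMulCommutative in infer_instance
  classical
  obtain ⟨u, hu, v, hv, huv, hnil⟩ := h _ (card_eq_four_of_not_commute hc)
  have hmem := mul_mem_and_mul_mem_of_two_mem (K := closure {u, v}) (by simpa using hu)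
    (by simpa using hv) huv (subset_closure (by simp)) (subset_closure (by simp))
  exact isNilpotent_of_le ((closure_le _).2 (Set.pair_subset_iff.2 hmem))

end

theorem stmt_1 {G : Type*} [Group G] (h : CondN3 G) :
    ∀ x y : G, Group.IsNilpotent ↥(Subgroup.closure {x, y⁻¹ * x * y}) := by
  intro x y
  have := h.isNilpotent_closure_mul_mul (y⁻¹ * x) y
  rwa [mul_inv_cancel_left, Set.pair_comm] at this
end

section
/- Let G be a group and λ a positive integer. Suppose that for all x, y in G, the subgroup ⟨x, xʸ⟩ is nilpotent of class at most λ. Then G is a (λ+1)-Engel group, i.e., [y, x, x, ..., x] = 1 with x repeated λ+1 times, for all x, y in G. -/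
/-! With Mathlib's convention `⁅y, x⁆ = y x y⁻¹ x⁻¹`, we have `⁅y, x⁆ = xʸ⁻¹ x⁻¹ ∈ ⟨x, xʸ⁻¹⟩`.
Hence `[y, x, …, x]` of weight `λ + 1` is the weight-`λ` commutator `[⁅y, x⁆, x, …, x]` computed
inside `⟨x, xʸ⁻¹⟩`, and it vanishes as soon as that subgroup has nilpotency class at most `λ`. -/

open scoped commutatorElement

/-- Left-normed iterated commutator: `engel y x n = [y, x, x, ..., x]` (n copies of x). -/
def engel {G : Type*} [Group G] (y x : G) : ℕ → G
  | 0 => y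
  | n + 1 => ⁅engel y x n, x⁆

section Engel

variable {G : Type*} [Group G]

theorem engel_succ (y x : G) (n : ℕ) : engel y x (n + 1) = engel ⁅y, x⁆ x n := by
  induction n with
  | zero => rfl
  | succ n ih => exact congrArg (⁅·, x⁆) ih

theorem map_engel {K : Type*} [Group K] (f : G →* K) (y x : G) (n : ℕ) :
    f (engel y x n) = engel (f y) (f x) n := by
  induction n with
  | zero => rfl
  | succ n ih => exact (map_commutatorElement f _ x).trans (congrArg (⁅·, f x⁆) ih)

theorem engel_mem_lowerCentralSeries (y x : G) (n : ℕ) :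
    engel y x n ∈ (⊤ : Subgroup G).lowerCentralSeries n := by
  induction n with
  | zero => exact Subgroup.mem_top y
  | succ n ih => exact Subgroup.commutator_mem_commutator ih (Subgroup.mem_top x)

theorem engel_eq_one_of_lowerCentralSeries_eq_bot {H : Subgroup G} {y x : G} (hy : y ∈ H)
    (hx : x ∈ H) {n : ℕ} (hH : (⊤ : Subgroup H).lowerCentralSeries n = ⊥) :
    engel y x n = 1 := by
  have hmem := engel_mem_lowerCentralSeries (⟨y, hy⟩ : H) ⟨x, hx⟩ n
  rw [hH, Subgroup.mem_bot] at hmem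
  simpa only [map_engel, map_one, Subgroup.subtype_apply] using congrArg H.subtype hmem

theorem commutator_mem_closure_conj (y x : G) :
    ⁅y, x⁆ ∈ Subgroup.closure {x, y * x * y⁻¹} := by
  rw [commutatorElement_def]
  exact mul_mem (Subgroup.subset_closure (Or.inr rfl))
    (inv_mem (Subgroup.subset_closure (Or.inl rfl)))

end Engel

theorem stmt_2_general {G : Type*} [Group G] (lam : ℕ)
    (h : ∀ x y : G, (⊤ : Subgroup ↥(Subgroup.closure {x, y⁻¹ * x * y})).lowerCentralSeries lam = ⊥) :
    ∀ x y : G, engel y x (lam + 1) = 1 := by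
  intro x y
  have hclass := h x y⁻¹
  rw [inv_inv] at hclass
  rw [engel_succ]
  exact engel_eq_one_of_lowerCentralSeries_eq_bot (commutator_mem_closure_conj y x)
    (Subgroup.subset_closure (Or.inl rfl)) hclass

theorem stmt_2 {G : Type*} [Group G] (lam : ℕ) (hlam : 1 ≤ lam)
    (h : ∀ x y : G, (⊤ : Subgroup ↥(Subgroup.closure {x, y⁻¹ * x * y})).lowerCentralSeries lam = ⊥) :
    ∀ x y : G, engel y x (lam + 1) = 1 :=
  stmt_2_general lam h
end

section
/- Let G be a group such that for all a, b in G, the subgroups ⟨a, aᵇ⟩ and ⟨a², b⟩ are nilpotent. Let p and q be distinct primes, x a p-element of G and y a q-element of G. Then xy = yx. -/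
/-!
In a nilpotent group generated by elements of `p`-power order every element has `p`-power order.
By induction on the length of the lower central series: `G ⧸ γₙ` is such a group, and the central
subgroup `γₙ = ⁅γₙ₋₁, G⁆` is generated by commutators `⁅h, t⁆` with
`⁅h, t⁆ ^ p ^ k = ⁅h, t ^ p ^ k⁆ = 1` as soon as `t ^ p ^ k ∈ γₙ`.

Now `⁅x, y⁆ = x * (y * x * y⁻¹)⁻¹` lies in the nilpotent group `⟨x, y * x * y⁻¹⟩`, generated by
`p`-elements, so it is a `p`-element; symmetrically `⁅y, x⁆ = ⁅x, y⁆⁻¹` is a `q`-element.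
-/

open Subgroup commutatorElement

section PElements

variable {G : Type*} [Group G] {p : ℕ}

theorem commutatorElement_pow_right_of_commute {h t : G} (hc : Commute ⁅h, t⁆ t) (n : ℕ) :
    ⁅h, t ^ n⁆ = ⁅h, t⁆ ^ n := by
  have hconj : h * t * h⁻¹ = ⁅h, t⁆ * t := by simp [commutatorElement_def]
  rw [commutatorElement_def, ← conj_pow, hconj, hc.mul_pow, mul_inv_cancel_right]

theorem commutatorElement_mem_closure_conj (a b : G) : ⁅a, b⁆ ∈ closure {a, b * a * b⁻¹} := by
  have hdecomp : ⁅a, b⁆ = a * (b * a * b⁻¹)⁻¹ := by simp [commutatorElement_def, mul_assoc]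
  rw [hdecomp]
  exact mul_mem (subset_closure (Set.mem_insert _ _))
    (inv_mem (subset_closure (Set.mem_insert_of_mem _ rfl)))

theorem IsPGroup.of_quotient {N : Subgroup G} [N.Normal] (hN : IsPGroup p N)
    (hQ : IsPGroup p (G ⧸ N)) : IsPGroup p G := by
  intro g
  obtain ⟨j, hj⟩ := hQ g
  have hgN : g ^ p ^ j ∈ N := (QuotientGroup.eq_one_iff _).mp (by rwa [QuotientGroup.mk_pow])
  obtain ⟨k, hk⟩ := hN ⟨_, hgN⟩
  exact ⟨j + k, by rw [pow_add, pow_mul]; exact congrArg Subtype.val hk⟩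

theorem isPGroup_closure_of_subset_center {S : Set G} (hS : S ⊆ center G)
    (hSp : ∀ s ∈ S, ∃ k, s ^ p ^ k = 1) : IsPGroup p (closure S) := by
  rintro ⟨g, hg⟩
  simp only [Subtype.ext_iff, SubgroupClass.coe_pow, OneMemClass.coe_one]
  induction hg using closure_induction with
  | mem s hs => exact hSp s hs
  | one => exact ⟨0, one_pow _⟩
  | mul x y hx _ hpx hpy =>
    obtain ⟨j, hj⟩ := hpx
    obtain ⟨k, hk⟩ := hpy
    have hxy : Commute x y := (mem_center_iff.mp (closure_le _ |>.mpr hS hx) y).symm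
    refine ⟨j + k, ?_⟩
    rw [hxy.mul_pow, pow_add, pow_mul, hj, one_pow, one_mul, mul_comm, pow_mul, hk, one_pow]
  | inv x _ hpx =>
    obtain ⟨k, hk⟩ := hpx
    exact ⟨k, by rw [inv_pow, hk, inv_one]⟩

theorem isPGroup_commutator_of_le_center {H K : Subgroup G} (hc : ⁅H, K⁆ ≤ center G)
    (hK : ∀ t ∈ K, ∃ k, t ^ p ^ k ∈ ⁅H, K⁆) : IsPGroup p (⁅H, K⁆ : Subgroup G) := by
  have hgen : {g | ∃ h ∈ H, ∃ t ∈ K, ⁅h, t⁆ = g} ⊆ (center G : Set G) :=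
    fun g hg ↦ hc (subset_closure hg)
  refine isPGroup_closure_of_subset_center hgen ?_
  rintro _ ⟨h, hh, t, ht, rfl⟩
  obtain ⟨k, hk⟩ := hK t ht
  have hcomm : Commute ⁅h, t⁆ t := (mem_center_iff.mp (hgen ⟨h, hh, t, ht, rfl⟩) t).symm
  refine ⟨k, ?_⟩
  rw [← commutatorElement_pow_right_of_commute hcomm, commutatorElement_eq_one_iff_mul_comm]
  exact mem_center_iff.mp (hc hk) h

theorem lowerCentralSeries_quotient_lowerCentralSeries_eq_bot (n : ℕ) :
    (⊤ : Subgroup (G ⧸ (⊤ : Subgroup G).lowerCentralSeries n)).lowerCentralSeries n = ⊥ := by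
  rw [← map_top_of_surjective _ (QuotientGroup.mk'_surjective _), ← map_lowerCentralSeries,
    Subgroup.map_eq_bot_iff, QuotientGroup.ker_mk']

theorem isPGroup_of_lowerCentralSeries_eq_bot {S : Set G} (hS : closure S = ⊤)
    (hSp : ∀ s ∈ S, ∃ k, s ^ p ^ k = 1) {n : ℕ}
    (hn : (⊤ : Subgroup G).lowerCentralSeries n = ⊥) : IsPGroup p G := by
  induction n generalizing G with
  | zero =>
    intro g
    have hg : g ∈ (⊥ : Subgroup G) := hn ▸ mem_top g
    exact ⟨0, by rw [mem_bot.mp hg, one_pow]⟩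
  | succ n ih =>
    set N := (⊤ : Subgroup G).lowerCentralSeries n
    have hNc : N ≤ center G := by
      rw [← centralizer_univ, ← coe_top, ← commutator_eq_bot_iff_le_centralizer]
      exact hn
    let π := QuotientGroup.mk' N
    have hQ : IsPGroup p (G ⧸ N) := by
      refine ih (S := π '' S) ?_ ?_ (lowerCentralSeries_quotient_lowerCentralSeries_eq_bot n)
      · rw [← MonoidHom.map_closure, hS, map_top_of_surjective _ (QuotientGroup.mk'_surjective _)]
      · rintro _ ⟨s, hs, rfl⟩
        obtain ⟨k, hk⟩ := hSp s hs
        exact ⟨k, by rw [← map_pow, hk, map_one]⟩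
    have hN : IsPGroup p N := by
      cases n with
      | zero =>
        -- here `N = ⊤`, so `G` is abelian
        have hSc : S ⊆ center G := fun s _ ↦ hNc (mem_top s)
        have hSp' := isPGroup_closure_of_subset_center hSc hSp
        rwa [hS] at hSp'
      | succ m =>
        refine isPGroup_commutator_of_le_center hNc fun t _ ↦ ?_
        obtain ⟨k, hk⟩ := hQ t
        exact ⟨k, (QuotientGroup.eq_one_iff _).mp (by rwa [QuotientGroup.mk_pow])⟩
    exact hN.of_quotient hQ

theorem isPGroup_closure_of_isNilpotent {S : Set G} (hnil : Group.IsNilpotent (closure S))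
    (hSp : ∀ s ∈ S, ∃ k, s ^ p ^ k = 1) : IsPGroup p (closure S) := by
  obtain ⟨n, hn⟩ := Subgroup.nilpotent_iff_lowerCentralSeries.mp hnil
  refine isPGroup_of_lowerCentralSeries_eq_bot closure_closure_coe_preimage ?_ hn
  rintro ⟨s, _⟩ hs
  obtain ⟨k, hk⟩ := hSp s hs
  exact ⟨k, Subtype.ext hk⟩

theorem exists_pow_commutatorElement_eq_one
    (hnil : ∀ a b : G, Group.IsNilpotent (closure {a, b * a * b⁻¹}))
    {x : G} {k : ℕ} (hx : x ^ p ^ k = 1) (y : G) : ∃ m, ⁅x, y⁆ ^ p ^ m = 1 := by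
  have hgen : ∀ s ∈ ({x, y * x * y⁻¹} : Set G), ∃ k, s ^ p ^ k = 1 := by
    rintro s (rfl | rfl)
    · exact ⟨k, hx⟩
    · exact ⟨k, by rw [conj_pow, hx, mul_one, mul_inv_cancel]⟩
  obtain ⟨m, hm⟩ := isPGroup_closure_of_isNilpotent (hnil x y) hgen
    ⟨_, commutatorElement_mem_closure_conj x y⟩
  exact ⟨m, congrArg Subtype.val hm⟩

end PElements

theorem stmt_4_general {G : Type*} [Group G]
    (h1 : ∀ a b : G, Group.IsNilpotent ↥(Subgroup.closure {a, b⁻¹ * a * b}))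
    (p q : ℕ) (hp : p.Prime) (hq : q.Prime) (hpq : p ≠ q)
    (x y : G) (hx : ∃ k : ℕ, orderOf x = p ^ k) (hy : ∃ m : ℕ, orderOf y = q ^ m) :
    x * y = y * x := by
  have hnil : ∀ a b : G, Group.IsNilpotent (closure {a, b * a * b⁻¹}) := fun a b ↦ by
    have h := h1 a b⁻¹
    rwa [inv_inv] at h
  obtain ⟨k, hk⟩ := hx
  obtain ⟨m, hm⟩ := hy
  obtain ⟨i, hi⟩ := exists_pow_commutatorElement_eq_one hnil (hk ▸ pow_orderOf_eq_one x) y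
  obtain ⟨j, hj⟩ := exists_pow_commutatorElement_eq_one hnil (hm ▸ pow_orderOf_eq_one y) x
  rw [← commutatorElement_inv, inv_pow, inv_eq_one] at hj
  have hcop : Nat.Coprime (p ^ i) (q ^ j) := ((Nat.coprime_primes hp hq).mpr hpq).pow i j
  have hxy : ⁅x, y⁆ = 1 := by
    simpa [hcop.gcd_eq_one] using pow_gcd_eq_one.mpr ⟨hi, hj⟩
  exact commutatorElement_eq_one_iff_mul_comm.mp hxy

theorem stmt_4 {G : Type*} [Group G]
    (h1 : ∀ a b : G, Group.IsNilpotent ↥(Subgroup.closure {a, b⁻¹ * a * b}))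
    (h2 : ∀ a b : G, Group.IsNilpotent ↥(Subgroup.closure {a ^ 2, b}))
    (p q : ℕ) (hp : p.Prime) (hq : q.Prime) (hpq : p ≠ q)
    (x y : G) (hx : ∃ k : ℕ, orderOf x = p ^ k) (hy : ∃ m : ℕ, orderOf y = q ^ m) :
    x * y = y * x :=
  stmt_4_general h1 p q hp hq hpq x y hx hy
end

section
/- Let λ be a positive integer and let G be a group that is residually (finite of odd order), such that for all x, y in G the subgroup ⟨x², y⟩ is nilpotent of class at most λ. Then every 2-generated subgroup of G is nilpotent of class at most λ. -/
/-!
Let `H = ⟨x, y⟩` and let `N` be a normal subgroup of `G` of odd index. Squaring is a bijection of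
`G ⧸ N`, so the image of `x` is the image of some `a ^ 2`, and `H` has the same image in `G ⧸ N`
as `⟨a ^ 2, y⟩`, whose lower central series vanishes at `lam`. Hence `γ_lam(H)` lies in every such
`N`, and it is trivial because `G` is residually of odd order.
-/

namespace Subgroup

variable {G : Type*} [Group G]

theorem top_lowerCentralSeries_eq_bot_iff (H : Subgroup G) (n : ℕ) :
    (⊤ : Subgroup H).lowerCentralSeries n = ⊥ ↔ H.lowerCentralSeries n = ⊥ := by
  rw [← map_subtype_inj, map_bot, top_subtype_lowerCentralSeries]

theorem lowerCentralSeries_le_ker_of_map_eq {Q : Type*} [Group Q] {f : G →* Q}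
    {H K : Subgroup G} (hHK : H.map f = K.map f) {n : ℕ} (hK : K.lowerCentralSeries n = ⊥) :
    H.lowerCentralSeries n ≤ f.ker := by
  rw [← map_eq_bot_iff, map_lowerCentralSeries, hHK, ← map_lowerCentralSeries, hK, map_bot]

end Subgroup

open Subgroup in
theorem stmt_10_general {G : Type*} [Group G] (lam : ℕ)
    (hres : ∀ g : G, g ≠ 1 → ∃ N : Subgroup G, N.Normal ∧ g ∉ N ∧
      Finite (G ⧸ N) ∧ Odd (Nat.card (G ⧸ N)))
    (h : ∀ x y : G, (⊤ : Subgroup ↥(Subgroup.closure {x ^ 2, y})).lowerCentralSeries lam = ⊥) :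
    ∀ x y : G, (⊤ : Subgroup ↥(Subgroup.closure {x, y})).lowerCentralSeries lam = ⊥ := by
  intro x y
  rw [top_lowerCentralSeries_eq_bot_iff, eq_bot_iff]
  intro g hg
  by_contra hg1
  obtain ⟨N, hN, hgN, -, hodd⟩ := hres g hg1
  obtain ⟨b, hb⟩ := hodd.coprime_two_right.pow_left_bijective.surjective (x : G ⧸ N)
  obtain ⟨a, rfl⟩ := QuotientGroup.mk_surjective b
  have himage : (closure {x, y}).map (QuotientGroup.mk' N) =
      (closure {a ^ 2, y}).map (QuotientGroup.mk' N) := by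
    simp only [MonoidHom.map_closure, Set.image_pair, map_pow, QuotientGroup.mk'_apply, hb]
  have hle := lowerCentralSeries_le_ker_of_map_eq himage
    ((top_lowerCentralSeries_eq_bot_iff _ _).1 (h a y))
  exact hgN (QuotientGroup.ker_mk' N ▸ hle hg)

theorem stmt_10 {G : Type*} [Group G] (lam : ℕ) (hlam : 1 ≤ lam)
    (hres : ∀ g : G, g ≠ 1 → ∃ N : Subgroup G, N.Normal ∧ g ∉ N ∧
      Finite (G ⧸ N) ∧ Odd (Nat.card (G ⧸ N)))
    (h : ∀ x y : G, (⊤ : Subgroup ↥(Subgroup.closure {x ^ 2, y})).lowerCentralSeries lam = ⊥) :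
    ∀ x y : G, (⊤ : Subgroup ↥(Subgroup.closure {x, y})).lowerCentralSeries lam = ⊥ :=
  stmt_10_general lam hres h
end

section
/- Let G be a group such that every subset of G with 4 elements contains a pair {x, y} with ⟨x, y⟩ abelian (i.e., G satisfies (𝒩₁, 3)). Then G is nilpotent of class at most 2. -/
/-!
Among `x, y, xy, x⁻¹y` two elements commute, and whichever pair it is, `x²` commutes with `y`.
So all squares are central. Every commutator is a product of squares,
`⁅a, b⁆ = (ab)² (b⁻¹a⁻¹b)² (b⁻¹)²`, hence the commutator subgroup is central and the group
is nilpotent of class at most two.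
-/

open Subgroup
open scoped commutatorElement

def CommutingPairAmong (G : Type*) [Mul G] (n : ℕ) : Prop :=
  ∀ S : Finset G, S.card = n → ∃ x ∈ S, ∃ y ∈ S, x ≠ y ∧ Commute x y

theorem CommutingPairAmong.exists_commute {G : Type*} [Mul G] {n : ℕ}
    (hG : CommutingPairAmong G n) (f : Fin n → G) : ∃ i j, i ≠ j ∧ Commute (f i) (f j) := by
  classical
  by_cases hf : Function.Injective f
  · obtain ⟨x, hx, y, hy, hne, hxy⟩ :=
      hG (Finset.univ.image f) (by rw [Finset.card_image_of_injective _ hf, Finset.card_fin])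
    obtain ⟨i, -, rfl⟩ := Finset.mem_image.mp hx
    obtain ⟨j, -, rfl⟩ := Finset.mem_image.mp hy
    exact ⟨i, j, fun hij => hne (congrArg f hij), hxy⟩
  · obtain ⟨i, j, hfij, hij⟩ := Function.not_injective_iff.mp hf
    exact ⟨i, j, hij, hfij ▸ Commute.refl _⟩

section Group

variable {G : Type*} [Group G]

theorem Commute.of_self_mul_right {x y : G} (h : Commute x (x * y)) : Commute x y := by
  simpa using (Commute.refl x).inv_right.mul_right h

theorem Commute.of_inv_self_mul_right {x y : G} (h : Commute x (x⁻¹ * y)) : Commute x y := by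
  simpa using (Commute.refl x).mul_right h

theorem Commute.of_mul_self_right {x y : G} (h : Commute y (x * y)) : Commute x y := by
  simpa using (h.mul_right (Commute.refl y).inv_right).symm

theorem Commute.of_inv_mul_self_right {x y : G} (h : Commute y (x⁻¹ * y)) : Commute x y := by
  simpa using (h.mul_right (Commute.refl y).inv_right).symm

theorem Commute.sq_left_of_mul_inv_mul {x y : G} (h : Commute (x * y) (x⁻¹ * y)) :
    Commute (x ^ 2) y :=
  calc x ^ 2 * y = x * ((x * y) * (x⁻¹ * y)) * y⁻¹ * x := by rw [sq]; group
    _ = x * ((x⁻¹ * y) * (x * y)) * y⁻¹ * x := by rw [h.eq]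
    _ = y * x ^ 2 := by rw [sq]; group

theorem commute_sq_left_of_commute_quadruple (x y : G) {i j : Fin 4} (hij : i ≠ j)
    (h : Commute (![x, y, x * y, x⁻¹ * y] i) (![x, y, x * y, x⁻¹ * y] j)) :
    Commute (x ^ 2) y := by
  wlog hlt : i < j generalizing i j
  · exact this hij.symm h.symm (lt_of_le_of_ne (not_lt.mp hlt) hij.symm)
  fin_cases i <;> fin_cases j <;> try exact absurd hlt (by decide)
  · exact h.pow_left 2
  · exact h.of_self_mul_right.pow_left 2
  · exact h.of_inv_self_mul_right.pow_left 2
  · exact h.of_mul_self_right.pow_left 2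
  · exact h.of_inv_mul_self_right.pow_left 2
  · exact h.sq_left_of_mul_inv_mul

theorem CommutingPairAmong.sq_mem_center (hG : CommutingPairAmong G 4) (x : G) :
    x ^ 2 ∈ center G := by
  refine mem_center_iff.mpr fun y => (?_ : Commute (x ^ 2) y).eq.symm
  obtain ⟨i, j, hij, h⟩ := hG.exists_commute ![x, y, x * y, x⁻¹ * y]
  exact commute_sq_left_of_commute_quadruple x y hij h

theorem commutatorElement_eq_sq_mul_sq_mul_sq (a b : G) :
    ⁅a, b⁆ = (a * b) ^ 2 * (b⁻¹ * a⁻¹ * b) ^ 2 * b⁻¹ ^ 2 := by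
  simp only [commutatorElement_def, sq]
  group

theorem commutator_le_center_of_sq_mem_center (h : ∀ x : G, x ^ 2 ∈ center G) :
    commutator G ≤ center G := by
  rw [commutator_def, commutator_le]
  intro a _ b _
  rw [commutatorElement_eq_sq_mul_sq_mul_sq]
  exact mul_mem (mul_mem (h _) (h _)) (h _)

end Group

theorem stmt_12 {G : Type*} [Group G]
    (h : ∀ S : Finset G, S.card = 4 → ∃ x ∈ S, ∃ y ∈ S, x ≠ y ∧
      ∀ a ∈ Subgroup.closure {x, y}, ∀ b ∈ Subgroup.closure {x, y}, a * b = b * a) :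
    (⊤ : Subgroup G).lowerCentralSeries 2 = ⊥ := by
  have hG : CommutingPairAmong G 4 := fun S hS => by
    obtain ⟨x, hx, y, hy, hne, hxy⟩ := h S hS
    exact ⟨x, hx, y, hy, hne, hxy x (subset_closure (by simp)) y (subset_closure (by simp))⟩
  apply Subgroup.lowerCentralSeries_succ_eq_bot
  rw [top_lowerCentralSeries_one]
  exact commutator_le_center_of_sq_mem_center hG.sq_mem_center
end

section
/- Let G be a group such that for all x, y in G, the subgroup ⟨x, xʸ⟩ is nilpotent of class at most 2. Then G is a 3-Engel group: [y, x, x, x] = 1 for all x, y in G. -/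
/-! With Mathlib's convention `⁅y, x⁆ = y * x * y⁻¹ * x⁻¹ = x ^ (y⁻¹) * x⁻¹`, the commutator
`⁅y, x⁆` lies in `⟨x, x ^ (y⁻¹)⟩`, so `⁅⁅⁅y, x⁆, x⁆, x⁆` is a commutator of weight three of
elements of a subgroup of class at most two, hence trivial. -/

open scoped commutatorElement

namespace Subgroup

variable {G : Type*} [Group G]

theorem lowerCentralSeries_eq_bot_of_top_lowerCentralSeries_eq_bot (H : Subgroup G) {n : ℕ}
    (h : (⊤ : Subgroup H).lowerCentralSeries n = ⊥) : H.lowerCentralSeries n = ⊥ := by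
  rw [← top_subtype_lowerCentralSeries, h, map_bot]

theorem commutatorElement_commutatorElement_eq_one {S : Subgroup G}
    (hS : S.lowerCentralSeries 2 = ⊥) {a b c : G} (ha : a ∈ S) (hb : b ∈ S) (hc : c ∈ S) :
    ⁅⁅a, b⁆, c⁆ = 1 := by
  have hmem : ⁅⁅a, b⁆, c⁆ ∈ S.lowerCentralSeries 2 :=
    commutator_mem_commutator (commutator_mem_commutator ha hb) hc
  rwa [hS, mem_bot] at hmem

theorem commutatorElement_mem_closure_pair_conj (x y : G) :
    ⁅y, x⁆ ∈ closure {x, y * x * y⁻¹} := by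
  rw [commutatorElement_def]
  exact mul_mem (subset_closure (by simp)) (inv_mem (subset_closure (by simp)))

end Subgroup

theorem stmt_14 {G : Type*} [Group G]
    (h : ∀ x y : G, (⊤ : Subgroup ↥(Subgroup.closure {x, y⁻¹ * x * y})).lowerCentralSeries 2 = ⊥) :
    ∀ x y : G, ⁅⁅⁅y, x⁆, x⁆, x⁆ = 1 := by
  intro x y
  have hclass := Subgroup.lowerCentralSeries_eq_bot_of_top_lowerCentralSeries_eq_bot _ (h x y⁻¹)
  rw [inv_inv] at hclass
  have hx : x ∈ Subgroup.closure {x, y * x * y⁻¹} := Subgroup.subset_closure (by simp)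
  exact Subgroup.commutatorElement_commutatorElement_eq_one hclass
    (Subgroup.commutatorElement_mem_closure_pair_conj x y) hx hx
end

section
/- Let G be a group satisfying condition (𝒩₂, 3): every subset of G with 4 elements contains a pair {x, y} such that ⟨x, y⟩ is nilpotent of class at most 2. Then G is solvable of derived length at most 3. -/
/-!
If among any four elements two generate a subgroup of class at most 2, then every square `x²` is
a right 2-Engel element: apply the hypothesis to `{x, y, xy, x²y}`, any two of which generate a
subgroup containing `x²` and `y`. By Kappe's theorem the right 2-Engel elements form a subgroup
`R`, which contains `G'` because `G` modulo the squares is abelian. A Levi-type computation shows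
that a commutator of weight four in elements of `R` has order dividing both 2 and 3, so `R'` is
abelian. Hence `G'' ≤ R'` is abelian.
-/

open scoped commutatorElement

section

variable {G : Type*} [Group G]

def IsRightTwoEngel (a : G) : Prop := ∀ y : G, ⁅⁅a, y⁆, y⁆ = 1

namespace IsRightTwoEngel

variable {a b : G}

theorem commute_commutatorElement_right (ha : IsRightTwoEngel a) (y : G) :
    Commute ⁅a, y⁆ y :=
  commutatorElement_eq_one_iff_commute.mp (ha y)

theorem commute_commutatorElement_left (ha : IsRightTwoEngel a) (y : G) :
    Commute ⁅a, y⁆ a := by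
  have h : Commute ⁅a, y⁆ (y * a) := by
    simpa [show ⁅a, y * a⁆ = ⁅a, y⁆ by group] using ha.commute_commutatorElement_right (y * a)
  simpa using (ha.commute_commutatorElement_right y).inv_right.mul_right h

theorem commutatorElement_inv_left (ha : IsRightTwoEngel a) (y : G) : ⁅a⁻¹, y⁆ = ⁅a, y⁆⁻¹ := by
  rw [_root_.commutatorElement_inv_left, ← commutatorElement_inv, mul_assoc,
    (ha.commute_commutatorElement_left y).inv_left.eq, inv_mul_cancel_left]

theorem commute_conj (ha : IsRightTwoEngel a) (g h : G) :
    Commute (g * a * g⁻¹) (h * a * h⁻¹) := by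
  have hself (k : G) : Commute a (k * a * k⁻¹) := by
    rw [show k * a * k⁻¹ = ⁅a, k⁆⁻¹ * a by group]
    exact (ha.commute_commutatorElement_left k).symm.inv_right.mul_right (Commute.refl a)
  simpa [mul_assoc] using (hself (g⁻¹ * h)).map (MulAut.conj g)

theorem commute_commutatorElement_commutatorElement (ha : IsRightTwoEngel a) (y z : G) :
    Commute ⁅a, y⁆ ⁅a, z⁆ := by
  have e (y : G) : ⁅a, y⁆ = (1 * a * 1⁻¹) * (y * a * y⁻¹)⁻¹ := by group
  have hc (g h k : G) : Commute (g * a * g⁻¹) ((h * a * h⁻¹) * (k * a * k⁻¹)⁻¹) :=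
    (ha.commute_conj g h).mul_right (ha.commute_conj g k).inv_right
  rw [e y, e z]
  exact (hc 1 1 z).mul_left (hc y 1 z).inv_left

theorem conj_commutatorElement' (ha : IsRightTwoEngel a) (hb : IsRightTwoEngel b) (x : G) :
    x * ⁅a, b⁆ * x⁻¹ = ⁅b, ⁅a, x⁆⁆⁻¹ * ⁅a, b⁆ := by
  have h0 : Commute (⁅a, x⁆ * (x * ⁅a, b⁆ * x⁻¹)) (x * b) := by
    simpa only [show ⁅a, x * b⁆ = ⁅a, x⁆ * (x * ⁅a, b⁆ * x⁻¹) by group]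
      using ha.commute_commutatorElement_right (x * b)
  have hw : ⁅b, ⁅a, x⁆⁆ * (⁅a, x⁆ * b) = b * ⁅a, x⁆ := by group
  have csx := ha.commute_commutatorElement_right x
  have cfb := ha.commute_commutatorElement_right b
  have cwb := hb.commute_commutatorElement_left ⁅a, x⁆
  have cws := hb.commute_commutatorElement_right ⁅a, x⁆
  generalize ⁅b, ⁅a, x⁆⁆ = w at *
  generalize ⁅a, x⁆ = s at *
  generalize ⁅a, b⁆ = f at *
  have hsb : s * b = b * (w⁻¹ * s) := by
    rw [← cwb.inv_left.left_comm, ← hw]; group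
  have h : x * b * (s * (w⁻¹ * f)) = x * b * (s * (x * f * x⁻¹)) :=
    calc x * b * (s * (w⁻¹ * f))
        = x * (b * (w⁻¹ * s)) * f := by rw [← cws.inv_left.left_comm]; group
      _ = s * x * (f * b) := by rw [← hsb, cfb.eq, csx.eq]; group
      _ = x * b * (s * (x * f * x⁻¹)) := by rw [← h0.eq]; group
  exact (mul_left_cancel (mul_left_cancel h)).symm

theorem commutatorElement_commutatorElement_comm (ha : IsRightTwoEngel a)
    (hb : IsRightTwoEngel b) (x : G) : ⁅b, ⁅a, x⁆⁆ = ⁅a, ⁅b, x⁆⁆⁻¹ := by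
  have h1 := ha.conj_commutatorElement' hb x
  have h2 := hb.conj_commutatorElement' ha x
  have hc := ha.commute_commutatorElement_commutatorElement b ⁅b, x⁆
  rw [← commutatorElement_inv a b] at h2
  generalize ⁅a, b⁆ = f at *
  generalize ⁅b, ⁅a, x⁆⁆ = u at *
  generalize ⁅a, ⁅b, x⁆⁆ = v at *
  have h3 : x * f * x⁻¹ = v * f := by
    rw [← hc.eq, ← inv_inv (x * f * x⁻¹),
      show (x * f * x⁻¹)⁻¹ = x * f⁻¹ * x⁻¹ by group, h2]
    group
  rw [h3] at h1
  rw [mul_right_cancel h1, inv_inv]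

theorem conj_commutatorElement (ha : IsRightTwoEngel a) (hb : IsRightTwoEngel b) (x : G) :
    x * ⁅a, b⁆ * x⁻¹ = ⁅a, ⁅b, x⁆⁆ * ⁅a, b⁆ := by
  rw [ha.conj_commutatorElement' hb, ha.commutatorElement_commutatorElement_comm hb, inv_inv]

theorem commutatorElement_commutatorElement_rotate (ha : IsRightTwoEngel a)
    (hb : IsRightTwoEngel b) (x : G) : ⁅x, ⁅a, b⁆⁆ = ⁅a, ⁅b, x⁆⁆ := by
  rw [commutatorElement_def x, ha.conj_commutatorElement hb, mul_inv_cancel_right]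

theorem commutatorElement_commutatorElement_left (ha : IsRightTwoEngel a)
    (hb : IsRightTwoEngel b) (x : G) : ⁅⁅a, b⁆, x⁆ = ⁅b, ⁅a, x⁆⁆ := by
  rw [← commutatorElement_inv, ha.commutatorElement_commutatorElement_rotate hb,
    ha.commutatorElement_commutatorElement_comm hb]

theorem commute_commutatorElement_commutatorElement_right (ha : IsRightTwoEngel a)
    (hb : IsRightTwoEngel b) (x : G) : Commute ⁅a, ⁅b, x⁆⁆ x := by
  have h0 : Commute (⁅a, b⁆ * (b * ⁅a, x⁆ * b⁻¹)) (b * x) := by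
    simpa only [show ⁅a, b * x⁆ = ⁅a, b⁆ * (b * ⁅a, x⁆ * b⁻¹) by group]
      using ha.commute_commutatorElement_right (b * x)
  have hbs : b * ⁅a, x⁆ * b⁻¹ = ⁅a, ⁅b, x⁆⁆⁻¹ * ⁅a, x⁆ := by
    rw [← ha.commutatorElement_commutatorElement_comm hb]; group
  have hxf := ha.conj_commutatorElement hb x
  have csx := ha.commute_commutatorElement_right x
  have cfb := ha.commute_commutatorElement_right b
  have cfu := ha.commute_commutatorElement_commutatorElement b ⁅b, x⁆
  rw [hbs] at h0
  generalize ⁅a, ⁅b, x⁆⁆ = u at *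
  generalize ⁅a, x⁆ = s at *
  generalize ⁅a, b⁆ = f at *
  have hsb : u⁻¹ * s * b = b * s := by rw [← hbs]; group
  have h : b * (u * f) * (u⁻¹ * (s * x)) = b * (u * f) * (x * (u⁻¹ * s)) :=
    calc b * (u * f) * (u⁻¹ * (s * x))
        = f * (u⁻¹ * s * b) * x := by rw [hsb, cfb.left_comm, ← cfu.eq]; group
      _ = b * x * (f * (u⁻¹ * s)) := by rw [← h0.eq]; group
      _ = b * (u * f) * (x * (u⁻¹ * s)) := by rw [← hxf]; group
  have h' := mul_left_cancel h
  rw [csx.eq, ← mul_assoc, ← mul_assoc] at h'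
  exact Commute.inv_left_iff.mp (mul_right_cancel h')

protected theorem one : IsRightTwoEngel (1 : G) := fun y => by group

protected theorem mul (ha : IsRightTwoEngel a) (hb : IsRightTwoEngel b) :
    IsRightTwoEngel (a * b) := fun x => by
  rw [commutatorElement_eq_one_iff_commute,
    show ⁅a * b, x⁆ = ⁅a, ⁅b, x⁆⁆ * ⁅b, x⁆ * ⁅a, x⁆ by group]
  exact ((ha.commute_commutatorElement_commutatorElement_right hb x).mul_left
    (hb.commute_commutatorElement_right x)).mul_left (ha.commute_commutatorElement_right x)

protected theorem inv (ha : IsRightTwoEngel a) : IsRightTwoEngel a⁻¹ := fun y => by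
  rw [ha.commutatorElement_inv_left, commutatorElement_eq_one_iff_commute]
  exact (ha.commute_commutatorElement_right y).inv_left

protected theorem commutatorElement (ha : IsRightTwoEngel a) (hb : IsRightTwoEngel b) :
    IsRightTwoEngel ⁅a, b⁆ := by
  rw [commutatorElement_def]
  exact ((ha.mul hb).mul ha.inv).mul hb.inv

theorem commutatorElement_commutatorElement_pow_three {c : G} (ha : IsRightTwoEngel a)
    (hb : IsRightTwoEngel b) (hc : IsRightTwoEngel c) : ⁅a, ⁅b, c⁆⁆ ^ 3 = 1 := by
  -- In the Hall–Witt identity for `b, a, c` all three double commutators are `⁅a, ⁅b, c⁆⁆⁻¹`.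
  have hw := conj_commutatorElement_left_commutatorElement_mul b a c
  rw [hb.commutatorElement_inv_left, (hb.commutatorElement ha).commutatorElement_inv_left,
    hb.commutatorElement_commutatorElement_left ha,
    hc.commutatorElement_inv_left, commutatorElement_inv c b, ← commutatorElement_inv a,
    ha.commutatorElement_inv_left, (ha.commutatorElement hc).commutatorElement_inv_left,
    commutatorElement_inv _ b, ha.commutatorElement_commutatorElement_comm hb] at hw
  have hta : Commute ⁅a, ⁅b, c⁆⁆⁻¹ a := (ha.commute_commutatorElement_left _).inv_left
  have htb : Commute ⁅a, ⁅b, c⁆⁆⁻¹ b := by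
    rw [← ha.commutatorElement_commutatorElement_comm hb]
    exact hb.commute_commutatorElement_left _
  have htc : Commute ⁅a, ⁅b, c⁆⁆⁻¹ c :=
    (ha.commute_commutatorElement_commutatorElement_right hb c).inv_left
  rw [← inv_eq_one, ← inv_pow]
  generalize ⁅a, ⁅b, c⁆⁆⁻¹ = t at hw hta htb htc ⊢
  calc t ^ 3 = b * t * b⁻¹ * (c * t * c⁻¹) * (a * t * a⁻¹) := by
        rw [htb.symm.mul_inv_cancel, htc.symm.mul_inv_cancel, hta.symm.mul_inv_cancel, pow_three']
    _ = 1 := by rw [← hw]; group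

theorem commutatorElement_commutatorElement_commutatorElement_sq {c d : G}
    (ha : IsRightTwoEngel a) (hb : IsRightTwoEngel b) (hc : IsRightTwoEngel c)
    (hd : IsRightTwoEngel d) : ⁅a, ⁅b, ⁅c, d⁆⁆⁆ ^ 2 = 1 := by
  rw [sq, mul_eq_one_iff_eq_inv]
  calc ⁅a, ⁅b, ⁅c, d⁆⁆⁆
      = ⁅b, ⁅a, ⁅c, d⁆⁆⁆⁻¹ := hb.commutatorElement_commutatorElement_comm ha _
    _ = ⁅b, ⁅d, ⁅a, c⁆⁆⁆⁻¹ := by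
        rw [hc.commutatorElement_commutatorElement_rotate hd,
          hd.commutatorElement_commutatorElement_rotate ha]
    _ = ⁅d, ⁅b, ⁅a, c⁆⁆⁆ := by rw [hd.commutatorElement_commutatorElement_comm hb, inv_inv]
    _ = ⁅d, ⁅c, ⁅b, a⁆⁆⁆ := by
        rw [ha.commutatorElement_commutatorElement_rotate hc,
          hc.commutatorElement_commutatorElement_rotate hb]
    _ = ⁅⁅b, a⁆, ⁅c, d⁆⁆⁻¹ := by
        rw [← hc.commutatorElement_commutatorElement_left hd, commutatorElement_inv]
    _ = ⁅a, ⁅b, ⁅c, d⁆⁆⁆⁻¹ := by rw [hb.commutatorElement_commutatorElement_left ha]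

theorem commutatorElement_commutatorElement_eq_one {c d : G} (ha : IsRightTwoEngel a)
    (hb : IsRightTwoEngel b) (hc : IsRightTwoEngel c) (hd : IsRightTwoEngel d) :
    ⁅⁅a, b⁆, ⁅c, d⁆⁆ = 1 := by
  rw [ha.commutatorElement_commutatorElement_left hb]
  have h2 := commutatorElement_commutatorElement_commutatorElement_sq hb ha hc hd
  have h3 := hb.commutatorElement_commutatorElement_pow_three ha (hc.commutatorElement hd)
  calc ⁅b, ⁅a, ⁅c, d⁆⁆⁆ = ⁅b, ⁅a, ⁅c, d⁆⁆⁆ ^ 3 * (⁅b, ⁅a, ⁅c, d⁆⁆⁆ ^ 2)⁻¹ := by group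
    _ = 1 := by rw [h2, h3, inv_one, one_mul]

end IsRightTwoEngel

variable (G) in
def rightTwoEngelSubgroup : Subgroup G where
  carrier := {a | IsRightTwoEngel a}
  one_mem' := IsRightTwoEngel.one
  mul_mem' := IsRightTwoEngel.mul
  inv_mem' := IsRightTwoEngel.inv

theorem isMulCommutative_commutator_rightTwoEngelSubgroup :
    IsMulCommutative (⁅rightTwoEngelSubgroup G, rightTwoEngelSubgroup G⁆ : Subgroup G) := by
  rw [Subgroup.commutator_def]
  refine Subgroup.isMulCommutative_closure ?_
  rintro _ ⟨a, ha, b, hb, rfl⟩ _ ⟨c, hc, d, hd, rfl⟩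
  exact commutatorElement_eq_one_iff_mul_comm.mp
    (IsRightTwoEngel.commutatorElement_commutatorElement_eq_one ha hb hc hd)

theorem derivedSeries_one_le_of_mul_self_mem {N : Subgroup G} (h : ∀ x : G, x * x ∈ N) :
    derivedSeries G 1 ≤ N := by
  rw [derivedSeries_succ, derivedSeries_zero, Subgroup.commutator_le]
  intro x _ y _
  rw [show ⁅x, y⁆ = x * x * ((x⁻¹ * y) * (x⁻¹ * y)) * (y⁻¹ * y⁻¹) by group]
  exact N.mul_mem (N.mul_mem (h x) (h _)) (h _)

theorem derivedSeries_three_eq_bot_of_isRightTwoEngel_mul_self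
    (h : ∀ x : G, IsRightTwoEngel (x * x)) : derivedSeries G 3 = ⊥ := by
  have h1 : derivedSeries G 1 ≤ rightTwoEngelSubgroup G := derivedSeries_one_le_of_mul_self_mem h
  have h2 : derivedSeries G 2 ≤ ⁅rightTwoEngelSubgroup G, rightTwoEngelSubgroup G⁆ :=
    Subgroup.commutator_mono h1 h1
  rw [eq_bot_iff, derivedSeries_succ]
  calc ⁅derivedSeries G 2, derivedSeries G 2⁆
      ≤ ⁅⁅rightTwoEngelSubgroup G, rightTwoEngelSubgroup G⁆,
          ⁅rightTwoEngelSubgroup G, rightTwoEngelSubgroup G⁆⁆ := Subgroup.commutator_mono h2 h2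
    _ = ⊥ := Subgroup.commutator_self_eq_bot_iff.mpr
        isMulCommutative_commutator_rightTwoEngelSubgroup

theorem Subgroup.commutatorElement_commutatorElement_eq_one_of_lowerCentralSeries_two_eq_bot
    {S : Subgroup G} (hS : S.lowerCentralSeries 2 = ⊥) {a b c : G} (ha : a ∈ S) (hb : b ∈ S)
    (hc : c ∈ S) : ⁅⁅a, b⁆, c⁆ = 1 :=
  mem_bot.mp (hS ▸ commutator_mem_commutator (commutator_mem_commutator ha hb) hc)

theorem card_eq_four_of_not_commute_mul_self [DecidableEq G] {x y : G}
    (hc : ¬Commute (x * x) y) : ({x, y, x * y, x * x * y} : Finset G).card = 4 := by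
  rw [Finset.card_eq_four]
  refine ⟨x, y, x * y, x * x * y, ?_, ?_, ?_, ?_, ?_, ?_, rfl⟩ <;> intro h <;> apply hc
  · subst h; exact (Commute.refl x).mul_left (Commute.refl x)
  · rw [left_eq_mul] at h; rw [h]; exact Commute.one_right _
  · rw [mul_assoc, left_eq_mul, mul_eq_one_iff_eq_inv] at h; subst h
    exact (Commute.refl y).inv_left.mul_left (Commute.refl y).inv_left
  · rw [right_eq_mul] at h; rw [h, mul_one]; exact Commute.one_left y
  · rw [right_eq_mul] at h; rw [h]; exact Commute.one_left y
  · rw [mul_left_inj, left_eq_mul] at h; rw [h, mul_one]; exact Commute.one_left y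

theorem mul_self_mem_and_mem_closure_pair {x y u v : G}
    (hu : u ∈ ({x, y, x * y, x * x * y} : Set G)) (hv : v ∈ ({x, y, x * y, x * x * y} : Set G))
    (huv : u ≠ v) : x * x ∈ Subgroup.closure {u, v} ∧ y ∈ Subgroup.closure {u, v} := by
  have mu : u ∈ Subgroup.closure {u, v} := Subgroup.subset_closure (by simp)
  have mv : v ∈ Subgroup.closure {u, v} := Subgroup.subset_closure (by simp)
  generalize Subgroup.closure {u, v} = H at *
  -- Every pair except `{y, x * x * y}` generates `x` and `y`; that one needs `mul_assoc` first.
  rcases hu with rfl | rfl | rfl | rfl <;> rcases hv with rfl | rfl | rfl | rfl <;>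
    first
    | simp_all [Subgroup.mul_mem_cancel_left, Subgroup.mul_mem_cancel_right]; done
    | simp_all [mul_assoc, Subgroup.mul_mem_cancel_left, Subgroup.mul_mem_cancel_right]

theorem isRightTwoEngel_mul_self
    (h : ∀ S : Finset G, S.card = 4 → ∃ x ∈ S, ∃ y ∈ S, x ≠ y ∧
      Subgroup.lowerCentralSeries (⊤ : Subgroup ↥(Subgroup.closure {x, y})) 2 = ⊥)
    (x : G) : IsRightTwoEngel (x * x) := by
  classical
  intro y
  by_cases hc : Commute (x * x) y
  · rw [commutatorElement_eq_one_iff_commute.mpr hc, commutatorElement_one_left]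
  obtain ⟨u, hu, v, hv, huv, hK⟩ := h _ (card_eq_four_of_not_commute_mul_self hc)
  obtain ⟨hx, hy⟩ := mul_self_mem_and_mem_closure_pair (by simpa using hu) (by simpa using hv) huv
  exact congrArg Subtype.val <|
    Subgroup.commutatorElement_commutatorElement_eq_one_of_lowerCentralSeries_two_eq_bot hK
      (a := ⟨x * x, hx⟩) (b := ⟨y, hy⟩) (c := ⟨y, hy⟩) trivial trivial trivial

end

theorem stmt_15 {G : Type*} [Group G]
    (h : ∀ S : Finset G, S.card = 4 → ∃ x ∈ S, ∃ y ∈ S, x ≠ y ∧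
      Subgroup.lowerCentralSeries (⊤ : Subgroup ↥(Subgroup.closure {x, y})) 2 = ⊥) :
    derivedSeries G 3 = ⊥ :=
  derivedSeries_three_eq_bot_of_isRightTwoEngel_mul_self (isRightTwoEngel_mul_self h)
end
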